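/- In the one-period return setup, assume additionally E[S] = (Δ−ε)ζ and E[Z] = λΔζ for some ζ ∈ ℝ. Then E[Xτ₀ | σ(τ₀)] = βετ₀² + (Δμ + βΔζ − βεζ + Δλρζ)τ₀ almost surely. -/

import Mathlib

open MeasureTheory ProbabilityTheory

section GaussAux

open Real
open scoped ENNReal NNReal

lemma aux_pdf_eq : ∀ x : ℝ, gaussianPDFReal 0 1 x
    = (Real.sqrt (2 * Real.pi))⁻¹ * Real.exp (-(1/2) * x ^ 2) := by
  intro x
  unfold gaussianPDFReal
  simp only [NNReal.coe_one, mul_one, sub_zero]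
  congr 1
  ring

lemma aux_int : Integrable (fun x : ℝ => gaussianPDFReal 0 1 x * x) := by
  have h := (integrable_rpow_mul_exp_neg_mul_sq (by norm_num : (0:ℝ) < 1/2)
    (by norm_num : (-1:ℝ) < 1)).const_mul (Real.sqrt (2 * Real.pi))⁻¹
  refine h.congr (Filter.Eventually.of_forall fun x => ?_)
  simp only [aux_pdf_eq, Real.rpow_one]
  ring

lemma aux_integral : ∫ x : ℝ, gaussianPDFReal 0 1 x * x = 0 := by
  have hodd : ∀ x : ℝ, gaussianPDFReal 0 1 (-x) * (-x) = -(gaussianPDFReal 0 1 x * x) := by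
    intro x
    have : gaussianPDFReal 0 1 (-x) = gaussianPDFReal 0 1 x := by
      rw [aux_pdf_eq, aux_pdf_eq]; ring_nf
    rw [this]; ring
  have h := integral_neg_eq_self (fun x : ℝ => gaussianPDFReal 0 1 x * x) volume
  simp only [hodd, integral_neg] at h
  linarith

lemma gauss_eq : gaussianReal 0 1 = (volume : Measure ℝ).withDensity
    (fun x => ((gaussianPDFReal 0 1 x).toNNReal : ℝ≥0∞)) := by
  rw [gaussianReal_of_var_ne_zero 0 one_ne_zero]
  rfl

lemma integrable_id_g : Integrable (fun x => x) (gaussianReal 0 1) := by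
  rw [gauss_eq, integrable_withDensity_iff_integrable_coe_smul
    (measurable_gaussianPDFReal 0 1).real_toNNReal]
  refine aux_int.congr (Filter.Eventually.of_forall fun x => ?_)
  simp [Real.coe_toNNReal _ (gaussianPDFReal_nonneg 0 1 x)]

lemma integral_id_g : ∫ x, x ∂(gaussianReal 0 1) = 0 := by
  rw [gauss_eq, integral_withDensity_eq_integral_smul
    (measurable_gaussianPDFReal 0 1).real_toNNReal]
  have h : (fun x : ℝ => (gaussianPDFReal 0 1 x).toNNReal • x)
      = fun x => gaussianPDFReal 0 1 x * x := by
    funext x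
    rw [NNReal.smul_def, Real.coe_toNNReal _ (gaussianPDFReal_nonneg 0 1 x), smul_eq_mul]
  rw [h, aux_integral]

lemma aux_sqrt_le (y : ℝ) : Real.sqrt y ≤ 1 + |y| := by
  rcases le_or_gt y 0 with h | h
  · rw [Real.sqrt_eq_zero_of_nonpos h]
    positivity
  · have h1 := Real.sq_sqrt h.le
    have h2 := Real.sqrt_nonneg y
    rw [abs_of_pos h]
    nlinarith [sq_nonneg (Real.sqrt y - 1)]

lemma int_split5 {Ω : Type*} {m : MeasurableSpace Ω} (ν : Measure Ω)
    (f1 f2 f3 f4 f5 : Ω → ℝ) (h1 : Integrable f1 ν) (h2 : Integrable f2 ν)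
    (h3 : Integrable f3 ν) (h4 : Integrable f4 ν) (h5 : Integrable f5 ν) :
    ∫ ω, (f1 ω + f2 ω + f3 ω + f4 ω + f5 ω) ∂ν
      = (∫ ω, f1 ω ∂ν) + (∫ ω, f2 ω ∂ν) + (∫ ω, f3 ω ∂ν)
        + (∫ ω, f4 ω ∂ν) + (∫ ω, f5 ω ∂ν) := by
  have h12 : Integrable (fun ω => f1 ω + f2 ω) ν := h1.add h2
  have h123 : Integrable (fun ω => f1 ω + f2 ω + f3 ω) ν := h12.add h3
  have h1234 : Integrable (fun ω => f1 ω + f2 ω + f3 ω + f4 ω) ν := h123.add h4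
  rw [integral_add h1234 h5, integral_add h123 h4, integral_add h12 h3, integral_add h1 h2]

lemma int_split2 {Ω : Type*} {m : MeasurableSpace Ω} (ν : Measure Ω)
    (f1 f2 : Ω → ℝ) (h1 : Integrable f1 ν) (h2 : Integrable f2 ν) :
    ∫ ω, (f1 ω + f2 ω) ∂ν = (∫ ω, f1 ω ∂ν) + (∫ ω, f2 ω ∂ν) :=
  integral_add h1 h2

end GaussAux

theorem stmt4 {Ω : Type*} {mΩ : MeasurableSpace Ω} (P : Measure Ω) [IsProbabilityMeasure P]
    (μ β σ ρ Δ lam γ ε : ℝ) (hΔ : 0 < Δ) (hlam : 0 < lam)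
    (hγ : γ = Real.exp (-(lam * Δ))) (hε : ε = (1 - γ) / lam)
    (τ₀ U S Z W : Ω → ℝ)
    (hτ : Measurable τ₀) (hU : Measurable U) (hS : Measurable S) (hZ : Measurable Z)
    (hW : Measurable W)
    (hτm : ∀ n : ℕ, Integrable (fun ω => |τ₀ ω| ^ n) P)
    (hUm : ∀ n : ℕ, Integrable (fun ω => |U ω| ^ n) P)
    (hSm : ∀ n : ℕ, Integrable (fun ω => |S ω| ^ n) P)
    (hZm : ∀ n : ℕ, Integrable (fun ω => |Z ω| ^ n) P)
    (hindep : IndepFun (fun ω => (U ω, S ω, Z ω)) τ₀ P)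
    (hWlaw : Measure.map W P = gaussianReal 0 1)
    (hWindep : IndepFun W (fun ω => (τ₀ ω, U ω, S ω, Z ω)) P)
    (Y X : Ω → ℝ)
    (hY : Y = fun ω => ε * τ₀ ω + S ω)
    (hYpos : ∀ᵐ ω ∂P, 0 ≤ Y ω)
    (hX : X = fun ω => μ * Δ + β * Y ω + σ * Real.sqrt (Y ω) * W ω + ρ * Z ω)
    (ζ : ℝ)
    (hSmean : ∫ ω, S ω ∂P = (Δ - ε) * ζ)
    (hZmean : ∫ ω, Z ω ∂P = lam * Δ * ζ) :
    P[fun ω => X ω * τ₀ ω | MeasurableSpace.comap τ₀ inferInstance] =ᵐ[P]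
      fun ω => β * ε * τ₀ ω ^ 2
        + (Δ * μ + β * Δ * ζ - β * ε * ζ + Δ * lam * ρ * ζ) * τ₀ ω := by
  classical
  subst hX
  subst hY
  have hm : MeasurableSpace.comap τ₀ inferInstance ≤ mΩ := hτ.comap_le
  haveI : SigmaFinite (P.trim hm) := inferInstance
  -- basic integrability
  have habs : ∀ f : Ω → ℝ, Measurable f → Integrable (fun ω => |f ω|) P → Integrable f P := by
    intro f hfm hfi
    exact Integrable.mono' hfi hfm.aestronglyMeasurable
      (Filter.Eventually.of_forall fun ω => le_of_eq (Real.norm_eq_abs _))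
  have hτ1 : Integrable τ₀ P := habs τ₀ hτ (by simpa using hτm 1)
  have hτ2 : Integrable (fun ω => τ₀ ω ^ 2) P :=
    (hτm 2).congr (Filter.Eventually.of_forall fun ω => by simp [sq_abs])
  have hS1 : Integrable S P := habs S hS (by simpa using hSm 1)
  have hZ1 : Integrable Z P := habs Z hZ (by simpa using hZm 1)
  have hSind : IndepFun S τ₀ P :=
    hindep.comp (measurable_fst.comp measurable_snd) measurable_id
  have hZind : IndepFun Z τ₀ P :=
    hindep.comp (measurable_snd.comp measurable_snd) measurable_id
  have hSτ : Integrable (fun ω => S ω * τ₀ ω) P := hSind.integrable_mul hS1 hτ1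
  have hZτ : Integrable (fun ω => Z ω * τ₀ ω) P := hZind.integrable_mul hZ1 hτ1
  have hW1 : Integrable W P := by
    have h : Integrable (fun x : ℝ => x) (Measure.map W P) := by
      rw [hWlaw]; exact integrable_id_g
    exact (integrable_map_measure aestronglyMeasurable_id hW.aemeasurable).mp h
  have hWmean : ∫ ω, W ω ∂P = 0 := by
    have h : ∫ x, (fun x : ℝ => x) x ∂(Measure.map W P) = ∫ ω, W ω ∂P :=
      integral_map hW.aemeasurable aestronglyMeasurable_id
    rw [hWlaw] at h
    exact h.symm.trans integral_id_g
  -- integrability of sqrt(Y) * φ for |φ| ≤ |τ₀|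
  have hbound : Integrable (fun ω => |τ₀ ω| + (|ε| * τ₀ ω ^ 2 + |S ω * τ₀ ω|)) P :=
    hτ1.abs.add ((hτ2.const_mul |ε|).add hSτ.abs)
  have hkey : ∀ φ : Ω → ℝ, (∀ ω, |φ ω| ≤ |τ₀ ω|) → AEStronglyMeasurable φ P →
      Integrable (fun ω => Real.sqrt (ε * τ₀ ω + S ω) * φ ω) P := by
    intro φ hφ hφm
    refine Integrable.mono' hbound
      ((((measurable_const.mul hτ).add hS).sqrt.aestronglyMeasurable).mul hφm)
      (Filter.Eventually.of_forall fun ω => ?_)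
    rw [Real.norm_eq_abs, abs_mul, abs_of_nonneg (Real.sqrt_nonneg _)]
    have h1 : |ε * τ₀ ω + S ω| ≤ |ε| * |τ₀ ω| + |S ω| := by
      refine (abs_add_le _ _).trans ?_
      rw [abs_mul]
    have h2 : (0:ℝ) ≤ |τ₀ ω| := abs_nonneg _
    have h3 := aux_sqrt_le (ε * τ₀ ω + S ω)
    have h4 := Real.sqrt_nonneg (ε * τ₀ ω + S ω)
    have h5 := hφ ω
    have h6 : (0:ℝ) ≤ |φ ω| := abs_nonneg _
    rw [abs_mul, ← sq_abs]
    nlinarith [abs_nonneg (S ω)]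
  have hsb : Integrable (fun ω => Real.sqrt (ε * τ₀ ω + S ω) * τ₀ ω) P :=
    hkey τ₀ (fun ω => le_refl _) hτ.aestronglyMeasurable
  have hWind' : IndepFun W (fun ω => Real.sqrt (ε * τ₀ ω + S ω) * τ₀ ω) P :=
    hWindep.comp measurable_id
      (((measurable_const.mul measurable_fst).add
        (measurable_fst.comp (measurable_snd.comp measurable_snd))).sqrt.mul measurable_fst)
  have hWYτ : Integrable (fun ω => W ω * (Real.sqrt (ε * τ₀ ω + S ω) * τ₀ ω)) P :=
    hWind'.integrable_mul hW1 hsb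
  -- rewriting the integrand
  have hfeq : (fun ω => (μ * Δ + β * (ε * τ₀ ω + S ω)
        + σ * Real.sqrt (ε * τ₀ ω + S ω) * W ω + ρ * Z ω) * τ₀ ω)
      = fun ω => μ * Δ * τ₀ ω + β * ε * τ₀ ω ^ 2 + β * (S ω * τ₀ ω)
        + σ * (W ω * (Real.sqrt (ε * τ₀ ω + S ω) * τ₀ ω)) + ρ * (Z ω * τ₀ ω) := by
    funext ω; ring
  have hfint : Integrable (fun ω => (μ * Δ + β * (ε * τ₀ ω + S ω)
      + σ * Real.sqrt (ε * τ₀ ω + S ω) * W ω + ρ * Z ω) * τ₀ ω) P := by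
    rw [hfeq]
    exact ((((hτ1.const_mul _).add (hτ2.const_mul _)).add (hSτ.const_mul _)).add
      (hWYτ.const_mul _)).add (hZτ.const_mul _)
  refine (ae_eq_condExp_of_forall_setIntegral_eq hm hfint
    (fun s _ _ => ?_) (fun s hs _ => ?_) ?_).symm
  · exact (((hτ2.const_mul _).add (hτ1.const_mul _))).integrableOn
  · -- set integral equality
    obtain ⟨B, hB, rfl⟩ := hs
    have hsm : MeasurableSet (τ₀ ⁻¹' B) := hτ hB
    set ψ : ℝ → ℝ := B.indicator id with hψdef
    have hψm : Measurable ψ := measurable_id.indicator hB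
    have hψle : ∀ t : ℝ, |ψ t| ≤ |t| := by
      intro t
      by_cases h : t ∈ B <;> simp [ψ, Set.indicator_apply, h, abs_nonneg]
    have hψτint : Integrable (fun ω => ψ (τ₀ ω)) P :=
      Integrable.mono' hτ1.abs ((hψm.comp hτ).aestronglyMeasurable)
        (Filter.Eventually.of_forall fun ω => by
          rw [Real.norm_eq_abs]; exact hψle _)
    have hJ1 : ∫ ω in τ₀ ⁻¹' B, τ₀ ω ∂P = ∫ ω, ψ (τ₀ ω) ∂P := by
      rw [← integral_indicator hsm]
      have h1 : Set.indicator (τ₀ ⁻¹' B) τ₀ = fun ω => ψ (τ₀ ω) := by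
        funext ω
        by_cases h : τ₀ ω ∈ B <;> simp [ψ, Set.indicator_apply, h]
      rw [h1]
    have hJ3 : ∫ ω in τ₀ ⁻¹' B, S ω * τ₀ ω ∂P = (Δ - ε) * ζ * ∫ ω, ψ (τ₀ ω) ∂P := by
      rw [← integral_indicator hsm]
      have h1 : (Set.indicator (τ₀ ⁻¹' B) fun ω => S ω * τ₀ ω)
          = fun ω => S ω * ψ (τ₀ ω) := by
        funext ω
        by_cases h : τ₀ ω ∈ B <;> simp [ψ, Set.indicator_apply, h]
      rw [h1]
      have hind2 : IndepFun S (fun ω => ψ (τ₀ ω)) P :=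
        hindep.comp (measurable_fst.comp measurable_snd) hψm
      have h2 := hind2.integral_fun_mul_eq_mul_integral hS1.aestronglyMeasurable hψτint.aestronglyMeasurable
      have h3 : integral P S = (Δ - ε) * ζ := hSmean
      exact h2.trans (by rw [h3])
    have hJ5 : ∫ ω in τ₀ ⁻¹' B, Z ω * τ₀ ω ∂P = lam * Δ * ζ * ∫ ω, ψ (τ₀ ω) ∂P := by
      rw [← integral_indicator hsm]
      have h1 : (Set.indicator (τ₀ ⁻¹' B) fun ω => Z ω * τ₀ ω)
          = fun ω => Z ω * ψ (τ₀ ω) := by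
        funext ω
        by_cases h : τ₀ ω ∈ B <;> simp [ψ, Set.indicator_apply, h]
      rw [h1]
      have hind2 : IndepFun Z (fun ω => ψ (τ₀ ω)) P :=
        hindep.comp (measurable_snd.comp measurable_snd) hψm
      have h2 := hind2.integral_fun_mul_eq_mul_integral hZ1.aestronglyMeasurable hψτint.aestronglyMeasurable
      have h3 : integral P Z = lam * Δ * ζ := hZmean
      exact h2.trans (by rw [h3])
    have hJ4 : ∫ ω in τ₀ ⁻¹' B,
        W ω * (Real.sqrt (ε * τ₀ ω + S ω) * τ₀ ω) ∂P = 0 := by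
      rw [← integral_indicator hsm]
      have h1 : (Set.indicator (τ₀ ⁻¹' B)
            fun ω => W ω * (Real.sqrt (ε * τ₀ ω + S ω) * τ₀ ω))
          = fun ω => W ω * (Real.sqrt (ε * τ₀ ω + S ω) * ψ (τ₀ ω)) := by
        funext ω
        by_cases h : τ₀ ω ∈ B <;> simp [ψ, Set.indicator_apply, h]
      rw [h1]
      have hind4 : IndepFun W (fun ω => Real.sqrt (ε * τ₀ ω + S ω) * ψ (τ₀ ω)) P :=
        hWindep.comp measurable_id
          (((measurable_const.mul measurable_fst).add
            (measurable_fst.comp (measurable_snd.comp measurable_snd))).sqrt.mul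
            (hψm.comp measurable_fst))
      have hintψ : Integrable (fun ω => Real.sqrt (ε * τ₀ ω + S ω) * ψ (τ₀ ω)) P :=
        hkey (fun ω => ψ (τ₀ ω)) (fun ω => hψle _) ((hψm.comp hτ).aestronglyMeasurable)
      have h2 := hind4.integral_fun_mul_eq_mul_integral hW1.aestronglyMeasurable hintψ.aestronglyMeasurable
      have h3 : integral P W = 0 := hWmean
      exact h2.trans (by rw [h3, zero_mul])
    -- split both sides
    rw [hfeq]
    rw [int_split5 (P.restrict (τ₀ ⁻¹' B))
      (fun ω => μ * Δ * τ₀ ω) (fun ω => β * ε * τ₀ ω ^ 2)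
      (fun ω => β * (S ω * τ₀ ω))
      (fun ω => σ * (W ω * (Real.sqrt (ε * τ₀ ω + S ω) * τ₀ ω)))
      (fun ω => ρ * (Z ω * τ₀ ω))
      ((hτ1.const_mul (μ * Δ)).integrableOn) ((hτ2.const_mul (β * ε)).integrableOn)
      ((hSτ.const_mul β).integrableOn) ((hWYτ.const_mul σ).integrableOn)
      ((hZτ.const_mul ρ).integrableOn)]
    rw [int_split2 (P.restrict (τ₀ ⁻¹' B))
      (fun ω => β * ε * τ₀ ω ^ 2)
      (fun ω => (Δ * μ + β * Δ * ζ - β * ε * ζ + Δ * lam * ρ * ζ) * τ₀ ω)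
      ((hτ2.const_mul (β * ε)).integrableOn)
      ((hτ1.const_mul (Δ * μ + β * Δ * ζ - β * ε * ζ + Δ * lam * ρ * ζ)).integrableOn)]
    simp only [integral_const_mul]
    rw [hJ1, hJ3, hJ4, hJ5]
    ring
  · -- measurability
    refine ⟨fun ω => β * ε * τ₀ ω ^ 2
        + (Δ * μ + β * Δ * ζ - β * ε * ζ + Δ * lam * ρ * ζ) * τ₀ ω, ?_, ?_⟩
    · have hτm' : Measurable[MeasurableSpace.comap τ₀ inferInstance] τ₀ :=
        fun s hs => ⟨s, hs, rfl⟩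
      exact (((hτm'.pow_const 2).const_mul (β * ε)).add
        (hτm'.const_mul _)).stronglyMeasurable
    · exact Filter.EventuallyEq.rfl
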